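/- arXiv:2312.06258 — 5 statements merged into one kernel-verified Lean document; each statement's English description precedes it below -/
import Mathlib

section
/- Let S and A be nonempty finite types, P a transition kernel, r a reward function with 0 ≤ r(s) ≤ r_max for all s, and γ ∈ [0,1) the discount factor. Let ε > 0, and suppose for each state s ∈ S a nonempty action cluster C(s) ⊆ A with a chosen representative rep(s) ∈ C(s) is given such that for all a, a' ∈ C(s), D_KL(P(·|s,a) ‖ P(·|s,a')) < ε (with P(s'|s,a) > 0 for all s, a, s' so the KL divergences are well defined). Given any policy π, define the masked policy π_C by π_C(rep(s)|s) = Σ_{a'∈C(s)} π(a'|s), π_C(a|s) = 0 for a ∈ C(s) \ {rep(s)}, and π_C(a|s) = π(a|s) for a ∉ C(s). Then sup_{s∈S} |V^π(s) − V^{π_C}(s)| ≤ (γ · r_max / (1−γ)²) · √(2ε). -/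
/-!
Masking moves the weight `π(C(s)|s)` onto `rep s`, so row `s` of the induced transition matrix
changes by `∑_{a ∈ C(s)} π(a|s) (P(·|s,a) - P(·|s,rep s))`, whose `ℓ¹` norm is at most `√(2ε)`
by Pinsker's inequality. For two stochastic matrices with `δ`-close rows, telescoping
`Mᵗ⁺¹r - Nᵗ⁺¹r = M (Mᵗr - Nᵗr) + (M - N) Nᵗr` bounds the `t`-step expected rewards apart by
`t δ r_max`, and `∑ₜ t γᵗ = γ / (1 - γ)²`.
-/

open Set Finset Matrix InformationTheory

lemma hasDerivAt_add_one_mul_log_sub {x : ℝ} (hx : 0 < x) :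
    HasDerivAt (fun y => (y + 1) * Real.log y - 2 * (y - 1)) (klFun x / x) x := by
  have := (((hasDerivAt_id x).add_const 1).mul (Real.hasDerivAt_log hx.ne')).sub
    (((hasDerivAt_id x).sub_const 1).const_mul 2)
  refine this.congr_deriv ?_
  simp only [klFun_apply, id]
  field_simp
  ring

lemma sub_one_mul_add_one_mul_log_sub_nonneg {x : ℝ} (hx : 0 < x) :
    0 ≤ (x - 1) * ((x + 1) * Real.log x - 2 * (x - 1)) := by
  have hmono : MonotoneOn (fun y => (y + 1) * Real.log y - 2 * (y - 1)) (Ioi 0) :=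
    monotoneOn_of_hasDerivWithinAt_nonneg (convex_Ioi 0)
      (fun y hy => (hasDerivAt_add_one_mul_log_sub hy).continuousAt.continuousWithinAt)
      (fun y hy => (hasDerivAt_add_one_mul_log_sub (interior_subset hy)).hasDerivWithinAt)
      (fun y hy => div_nonneg (klFun_nonneg (interior_subset hy).le) (interior_subset hy).le)
  rcases le_total 1 x with h | h
  · have := hmono (mem_Ioi.2 one_pos) hx h
    simp only [Real.log_one] at this
    nlinarith
  · have := hmono hx (mem_Ioi.2 one_pos) h
    simp only [Real.log_one] at this
    nlinarith

/-- Pinsker's inequality follows from this by Cauchy–Schwarz with the weights `(2p + 4q) / 3`,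
which sum to `2` over a pair of distributions. -/
lemma three_mul_sq_sub_one_le_klFun {x : ℝ} (hx : 0 ≤ x) :
    3 * (x - 1) ^ 2 ≤ (2 * x + 4) * klFun x := by
  rcases hx.eq_or_lt with rfl | hx
  · norm_num [klFun_zero]
  set g : ℝ → ℝ := fun y => (2 * y + 4) * klFun y - 3 * (y - 1) ^ 2
  have hg : ∀ y, 0 < y → HasDerivAt g (4 * ((y + 1) * Real.log y - 2 * (y - 1))) y := by
    intro y hy
    have := ((((hasDerivAt_id y).const_mul 2).add_const 4).mul (hasDerivAt_klFun hy.ne')).sub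
      ((((hasDerivAt_id y).sub_const 1).pow 2).const_mul 3)
    refine this.congr_deriv ?_
    simp only [klFun_apply, id]
    ring
  have hmin : IsMinOn g (Ioi 0) 1 := by
    refine isMinOn_Ioi_of_deriv (hg 1 one_pos).continuousAt
      (fun y hy => (hg y hy.1).differentiableAt.differentiableWithinAt)
      (fun y hy => (hg y (one_pos.trans hy)).differentiableAt.differentiableWithinAt)
      (fun y hy => ?_) (fun y hy => ?_)
    · rw [(hg y hy.1).deriv]
      nlinarith [sub_one_mul_add_one_mul_log_sub_nonneg hy.1, hy.2]
    · rw [(hg y (one_pos.trans hy)).deriv]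
      nlinarith [sub_one_mul_add_one_mul_log_sub_nonneg (one_pos.trans hy), mem_Ioi.1 hy]
  have := hmin hx
  simp only [g, klFun_one, mem_ofPred_eq] at this
  linarith

lemma sq_sub_div_le_mul_klFun {p q : ℝ} (hp : 0 ≤ p) (hq : 0 < q) :
    (p - q) ^ 2 / ((2 * p + 4 * q) / 3) ≤ q * klFun (p / q) := by
  have hx := three_mul_sq_sub_one_le_klFun (div_nonneg hp hq.le)
  rw [div_le_iff₀ (by positivity)]
  have h1 : p - q = q * (p / q - 1) := by field_simp
  have h2 : 2 * p + 4 * q = q * (2 * (p / q) + 4) := by field_simp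
  rw [h1, h2]
  nlinarith [mul_le_mul_of_nonneg_left hx (sq_nonneg q)]

lemma sum_abs_sub_le_sqrt_two_mul_kl {ι : Type*} [Fintype ι] {p q : ι → ℝ}
    (hp : ∀ i, 0 ≤ p i) (hq : ∀ i, 0 < q i) (hp1 : ∑ i, p i = 1) (hq1 : ∑ i, q i = 1) :
    ∑ i, |p i - q i| ≤ √(2 * ∑ i, p i * Real.log (p i / q i)) := by
  have hkl : ∑ i, q i * klFun (p i / q i) = ∑ i, p i * Real.log (p i / q i) := by
    have (i : ι) : q i * klFun (p i / q i) = p i * Real.log (p i / q i) + (q i - p i) := by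
      have := (hq i).ne'
      rw [klFun_apply]; field_simp; ring
    simp only [this, sum_add_distrib, sum_sub_distrib, hp1, hq1, sub_self, add_zero]
  have hweights : ∑ i, (2 * p i + 4 * q i) / 3 = 2 := by
    rw [← sum_div, sum_add_distrib, ← mul_sum, ← mul_sum, hp1, hq1]; norm_num
  have htitu := sq_sum_div_le_sum_sq_div univ (fun i => |p i - q i|)
    (g := fun i => (2 * p i + 4 * q i) / 3) (fun i _ => by have := hp i; have := hq i; positivity)
  simp only [hweights, sq_abs] at htitu
  apply Real.le_sqrt_of_sq_le
  calc (∑ i, |p i - q i|) ^ 2 ≤ 2 * ∑ i, (p i - q i) ^ 2 / ((2 * p i + 4 * q i) / 3) := by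
        linarith
    _ ≤ 2 * ∑ i, p i * Real.log (p i / q i) := by
        rw [← hkl]
        gcongr with i
        exact sq_sub_div_le_mul_klFun (hp i) (hq i)

lemma sum_abs_sum_mul_le {ι κ : Type*} [Fintype κ] {c : Finset ι} {w : ι → ℝ}
    {x : ι → κ → ℝ} {δ : ℝ} (hw0 : ∀ i ∈ c, 0 ≤ w i) (hw1 : ∑ i ∈ c, w i ≤ 1) (hδ : 0 ≤ δ)
    (hx : ∀ i ∈ c, ∑ j, |x i j| ≤ δ) :
    ∑ j, |∑ i ∈ c, w i * x i j| ≤ δ :=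
  calc ∑ j, |∑ i ∈ c, w i * x i j| ≤ ∑ j, ∑ i ∈ c, w i * |x i j| :=
        sum_le_sum fun j _ => (abs_sum_le_sum_abs _ _).trans_eq
          (sum_congr rfl fun i hi => by rw [abs_mul, abs_of_nonneg (hw0 i hi)])
    _ = ∑ i ∈ c, w i * ∑ j, |x i j| := by rw [sum_comm]; simp_rw [mul_sum]
    _ ≤ ∑ i ∈ c, w i * δ := sum_le_sum fun i hi => mul_le_mul_of_nonneg_left (hx i hi) (hw0 i hi)
    _ ≤ δ := by rw [← sum_mul]; exact mul_le_of_le_one_left hδ hw1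

section Perturbation

variable {m n : Type*} [Fintype n]

lemma abs_mulVec_apply_le (M : Matrix m n ℝ) {v : n → ℝ} {c : ℝ} (hv : ∀ j, |v j| ≤ c) (i : m) :
    |(M *ᵥ v) i| ≤ (∑ j, |M i j|) * c :=
  calc |(M *ᵥ v) i| ≤ ∑ j, |M i j| * |v j| := by
        simp only [mulVec, dotProduct, ← abs_mul]; exact abs_sum_le_sum_abs _ _
    _ ≤ ∑ j, |M i j| * c := sum_le_sum fun j _ => mul_le_mul_of_nonneg_left (hv j) (abs_nonneg _)
    _ = (∑ j, |M i j|) * c := (sum_mul _ _ _).symm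

variable [DecidableEq n] {M N : Matrix n n ℝ}

lemma abs_mulVec_apply_le_of_mem_rowStochastic (hM : M ∈ rowStochastic ℝ n) {v : n → ℝ} {c : ℝ}
    (hv : ∀ j, |v j| ≤ c) (i : n) : |(M *ᵥ v) i| ≤ c := by
  have hrow : ∑ j, |M i j| = 1 := by
    simp only [abs_of_nonneg (nonneg_of_mem_rowStochastic hM), sum_row_of_mem_rowStochastic hM]
  simpa [hrow] using abs_mulVec_apply_le M hv i

lemma abs_pow_mulVec_sub_pow_mulVec_le (hM : M ∈ rowStochastic ℝ n)
    (hN : N ∈ rowStochastic ℝ n) {δ R : ℝ} (hMN : ∀ i, ∑ j, |M i j - N i j| ≤ δ) {r : n → ℝ}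
    (hr : ∀ j, |r j| ≤ R) (t : ℕ) (i : n) :
    |(M ^ t *ᵥ r) i - (N ^ t *ᵥ r) i| ≤ t * (δ * R) := by
  induction t generalizing i with
  | zero => simp
  | succ t ih =>
    have hR : 0 ≤ R := (abs_nonneg _).trans (hr i)
    set v := M ^ t *ᵥ r
    set w := N ^ t *ᵥ r
    have hw : ∀ j, |w j| ≤ R := abs_mulVec_apply_le_of_mem_rowStochastic (pow_mem hN t) hr
    have hdiff : |(M *ᵥ w) i - (N *ᵥ w) i| ≤ δ * R := by
      rw [← Pi.sub_apply, ← sub_mulVec]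
      exact (abs_mulVec_apply_le (M - N) hw i).trans (mul_le_mul_of_nonneg_right (hMN i) hR)
    rw [pow_succ', pow_succ', ← mulVec_mulVec, ← mulVec_mulVec]
    calc |(M *ᵥ v) i - (N *ᵥ w) i| = |(M *ᵥ (v - w)) i + ((M *ᵥ w) i - (N *ᵥ w) i)| := by
          rw [mulVec_sub, Pi.sub_apply]; ring_nf
      _ ≤ |(M *ᵥ (v - w)) i| + |(M *ᵥ w) i - (N *ᵥ w) i| := abs_add_le _ _
      _ ≤ t * (δ * R) + δ * R := add_le_add (abs_mulVec_apply_le_of_mem_rowStochastic hM ih i) hdiff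
      _ = (t + 1 : ℕ) * (δ * R) := by push_cast; ring

end Perturbation

lemma abs_tsum_geometric_mul_sub_le {γ R K : ℝ} (hγ0 : 0 ≤ γ) (hγ1 : γ < 1) {v w : ℕ → ℝ}
    (hv : ∀ t, |v t| ≤ R) (hw : ∀ t, |w t| ≤ R) (hvw : ∀ t, |v t - w t| ≤ t * K) :
    |∑' t, γ ^ t * v t - ∑' t, γ ^ t * w t| ≤ γ / (1 - γ) ^ 2 * K := by
  have hγ : ‖γ‖ < 1 := by rwa [Real.norm_of_nonneg hγ0]
  have hnorm (u : ℕ → ℝ) (t : ℕ) : ‖γ ^ t * u t‖ = γ ^ t * |u t| := by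
    rw [norm_mul, norm_pow, Real.norm_of_nonneg hγ0, Real.norm_eq_abs]
  have hsummable (u : ℕ → ℝ) (hu : ∀ t, |u t| ≤ R) : Summable fun t => γ ^ t * u t :=
    ((summable_geometric_of_lt_one hγ0 hγ1).mul_right R).of_norm_bounded fun t => by
      rw [hnorm]; exact mul_le_mul_of_nonneg_left (hu t) (pow_nonneg hγ0 t)
  rw [← (hsummable v hv).tsum_sub (hsummable w hw), ← Real.norm_eq_abs]
  refine tsum_of_norm_bounded ((hasSum_coe_mul_geometric_of_norm_lt_one hγ).mul_right K)
    fun t => ?_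
  rw [← mul_sub, hnorm (fun t => v t - w t)]
  calc γ ^ t * |v t - w t| ≤ γ ^ t * (t * K) := mul_le_mul_of_nonneg_left (hvw t) (pow_nonneg hγ0 t)
    _ = t * γ ^ t * K := by ring

section MaskedPolicy

variable {S A : Type*} [DecidableEq A]

def maskedPolicy (C : S → Finset A) (rep : S → A) (π : S → A → ℝ) (s : S) (a : A) : ℝ :=
  if a = rep s then ∑ a' ∈ C s, π s a' else if a ∈ C s then 0 else π s a

variable {C : S → Finset A} {rep : S → A} {π : S → A → ℝ}

lemma maskedPolicy_nonneg (hπ0 : ∀ s a, 0 ≤ π s a) (s : S) (a : A) :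
    0 ≤ maskedPolicy C rep π s a := by
  unfold maskedPolicy
  split_ifs
  · exact sum_nonneg fun a' _ => hπ0 s a'
  · exact le_rfl
  · exact hπ0 s a

variable [Fintype A]

lemma sum_maskedPolicy_mul_sub {s : S} (hrep : rep s ∈ C s) (f : A → ℝ) :
    ∑ a, maskedPolicy C rep π s a * f a - ∑ a, π s a * f a
      = ∑ a ∈ C s, π s a * (f (rep s) - f a) := by
  have hin : ∑ a ∈ C s, maskedPolicy C rep π s a * f a = (∑ a ∈ C s, π s a) * f (rep s) := by
    rw [sum_eq_single_of_mem (rep s) hrep fun a ha hne => by simp [maskedPolicy, hne, ha]]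
    simp [maskedPolicy]
  have hout : ∑ a ∈ (C s)ᶜ, maskedPolicy C rep π s a * f a = ∑ a ∈ (C s)ᶜ, π s a * f a :=
    sum_congr rfl fun a ha => by
      have ha' : a ∉ C s := mem_compl.1 ha
      have hne : a ≠ rep s := fun h => ha' (h ▸ hrep)
      simp [maskedPolicy, hne, ha']
  rw [← sum_add_sum_compl (C s), ← sum_add_sum_compl (C s) (fun a => π s a * f a), hin, hout,
    sum_mul]
  simp only [mul_sub, sum_sub_distrib]
  ring

lemma sum_maskedPolicy {s : S} (hrep : rep s ∈ C s) :
    ∑ a, maskedPolicy C rep π s a = ∑ a, π s a := by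
  simpa [sub_eq_zero] using sum_maskedPolicy_mul_sub (π := π) hrep (fun _ => 1)

end MaskedPolicy

section PolicyMatrix

variable {S A : Type*} [Fintype S] [Fintype A]

def policyMatrix (P : S → A → S → ℝ) (π : S → A → ℝ) : Matrix S S ℝ :=
  fun s s' => ∑ a, π s a * P s a s'

variable {P : S → A → S → ℝ} {π : S → A → ℝ}

lemma policyMatrix_mem_rowStochastic [DecidableEq S] (hP0 : ∀ s a s', 0 ≤ P s a s')
    (hP1 : ∀ s a, ∑ s', P s a s' = 1) (hπ0 : ∀ s a, 0 ≤ π s a) (hπ1 : ∀ s, ∑ a, π s a = 1) :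
    policyMatrix P π ∈ rowStochastic ℝ S := by
  refine mem_rowStochastic_iff_sum.2
    ⟨fun s s' => sum_nonneg fun a _ => mul_nonneg (hπ0 s a) (hP0 s a s'), fun s => ?_⟩
  simp only [policyMatrix]
  rw [sum_comm]
  simp only [← mul_sum, hP1, mul_one, hπ1]

lemma sum_abs_policyMatrix_sub_maskedPolicy_le [DecidableEq A] {C : S → Finset A} {rep : S → A}
    {ε : ℝ} (hP0 : ∀ s a s', 0 < P s a s') (hP1 : ∀ s a, ∑ s', P s a s' = 1)
    (hπ0 : ∀ s a, 0 ≤ π s a) (hπ1 : ∀ s, ∑ a, π s a = 1) {s : S} (hrep : rep s ∈ C s)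
    (hKL : ∀ a ∈ C s, ∑ s', P s a s' * Real.log (P s a s' / P s (rep s) s') ≤ ε) :
    ∑ s', |policyMatrix P π s s' - policyMatrix P (maskedPolicy C rep π) s s'| ≤ √(2 * ε) := by
  have hdiff (s' : S) : policyMatrix P π s s' - policyMatrix P (maskedPolicy C rep π) s s'
      = ∑ a ∈ C s, π s a * (P s a s' - P s (rep s) s') := by
    rw [← neg_sub, policyMatrix, policyMatrix,
      sum_maskedPolicy_mul_sub hrep (fun a => P s a s'), ← sum_neg_distrib]
    exact sum_congr rfl fun a _ => by ring
  simp only [hdiff]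
  refine sum_abs_sum_mul_le (fun a _ => hπ0 s a)
    ((sum_le_univ_sum_of_nonneg (hπ0 s)).trans_eq (hπ1 s)) (Real.sqrt_nonneg _) fun a ha => ?_
  exact (sum_abs_sub_le_sqrt_two_mul_kl (fun s' => (hP0 s a s').le) (hP0 s (rep s))
    (hP1 s a) (hP1 s (rep s))).trans (Real.sqrt_le_sqrt (by linarith [hKL a ha]))

end PolicyMatrix

theorem masked_policy_value_diff_le_general
    {S A : Type*} [Fintype S] [Fintype A] [DecidableEq S] [DecidableEq A]
    (P : S → A → S → ℝ)
    (hP0 : ∀ s a s', 0 < P s a s')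
    (hP1 : ∀ s a, ∑ s', P s a s' = 1)
    (r : S → ℝ) (rmax : ℝ)
    (hr : ∀ s, 0 ≤ r s ∧ r s ≤ rmax)
    (γ : ℝ) (hγ0 : 0 ≤ γ) (hγ1 : γ < 1)
    (ε : ℝ)
    (C : S → Finset A)
    (rep : S → A) (hrep : ∀ s, rep s ∈ C s)
    (hKL : ∀ s, ∀ a ∈ C s, ∀ a' ∈ C s,
      ∑ s', P s a s' * Real.log (P s a s' / P s a' s') < ε)
    (π : S → A → ℝ)
    (hπ0 : ∀ s a, 0 ≤ π s a)
    (hπ1 : ∀ s, ∑ a, π s a = 1)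
    (πC : S → A → ℝ)
    (hπC : ∀ s a, πC s a =
      if a = rep s then ∑ a' ∈ C s, π s a'
      else if a ∈ C s then 0 else π s a)
    (Q QC : Matrix S S ℝ)
    (hQ : ∀ s s', Q s s' = ∑ a, π s a * P s a s')
    (hQC : ∀ s s', QC s s' = ∑ a, πC s a * P s a s') :
    ∀ s : S,
      |(∑' t : ℕ, γ ^ t * ∑ s', (Q ^ t) s s' * r s')
        - ∑' t : ℕ, γ ^ t * ∑ s', (QC ^ t) s s' * r s'|
      ≤ γ * rmax / (1 - γ) ^ 2 * Real.sqrt (2 * ε) := by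
  obtain rfl : πC = maskedPolicy C rep π := funext₂ hπC
  obtain rfl : Q = policyMatrix P π := Matrix.ext hQ
  obtain rfl : QC = policyMatrix P (maskedPolicy C rep π) := Matrix.ext hQC
  have hP0' (s a s') : 0 ≤ P s a s' := (hP0 s a s').le
  have hQ_mem := policyMatrix_mem_rowStochastic hP0' hP1 hπ0 hπ1
  have hQC_mem := policyMatrix_mem_rowStochastic hP0' hP1 (maskedPolicy_nonneg hπ0)
    fun s => (sum_maskedPolicy (hrep s)).trans (hπ1 s)
  have hrow (s : S) := sum_abs_policyMatrix_sub_maskedPolicy_le hP0 hP1 hπ0 hπ1 (hrep s)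
    fun a ha => (hKL s a ha (rep s) (hrep s)).le
  have hr' (s : S) : |r s| ≤ rmax := abs_le.2 ⟨by linarith [hr s], (hr s).2⟩
  intro s
  calc _ ≤ γ / (1 - γ) ^ 2 * (√(2 * ε) * rmax) :=
        abs_tsum_geometric_mul_sub_le hγ0 hγ1
          (fun t => abs_mulVec_apply_le_of_mem_rowStochastic (pow_mem hQ_mem t) hr' s)
          (fun t => abs_mulVec_apply_le_of_mem_rowStochastic (pow_mem hQC_mem t) hr' s)
          (fun t => abs_pow_mulVec_sub_pow_mulVec_le hQ_mem hQC_mem hrow hr' t s)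
    _ = γ * rmax / (1 - γ) ^ 2 * √(2 * ε) := by ring

/-- Lemma 1: masking a cluster of actions whose next-state distributions are
pairwise within ε in KL divergence changes the value function of any policy by
at most γ·r_max·√(2ε)/(1-γ)², uniformly over states. -/
theorem masked_policy_value_diff_le
    {S A : Type*} [Fintype S] [Fintype A] [DecidableEq S] [Nonempty S] [Nonempty A] [DecidableEq A]
    (P : S → A → S → ℝ)
    (hP0 : ∀ s a s', 0 < P s a s')
    (hP1 : ∀ s a, ∑ s', P s a s' = 1)
    (r : S → ℝ) (rmax : ℝ)
    (hr : ∀ s, 0 ≤ r s ∧ r s ≤ rmax)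
    (γ : ℝ) (hγ0 : 0 ≤ γ) (hγ1 : γ < 1)
    (ε : ℝ) (hε : 0 < ε)
    (C : S → Finset A) (hC : ∀ s, (C s).Nonempty)
    (rep : S → A) (hrep : ∀ s, rep s ∈ C s)
    (hKL : ∀ s, ∀ a ∈ C s, ∀ a' ∈ C s,
      ∑ s', P s a s' * Real.log (P s a s' / P s a' s') < ε)
    (π : S → A → ℝ)
    (hπ0 : ∀ s a, 0 ≤ π s a)
    (hπ1 : ∀ s, ∑ a, π s a = 1)
    (πC : S → A → ℝ)
    (hπC : ∀ s a, πC s a =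
      if a = rep s then ∑ a' ∈ C s, π s a'
      else if a ∈ C s then 0 else π s a)
    (Q QC : Matrix S S ℝ)
    (hQ : ∀ s s', Q s s' = ∑ a, π s a * P s a s')
    (hQC : ∀ s s', QC s s' = ∑ a, πC s a * P s a s') :
    ∀ s : S,
      |(∑' t : ℕ, γ ^ t * ∑ s', (Q ^ t) s s' * r s')
        - ∑' t : ℕ, γ ^ t * ∑ s', (QC ^ t) s s' * r s'|
      ≤ γ * rmax / (1 - γ) ^ 2 * Real.sqrt (2 * ε) :=
  masked_policy_value_diff_le_general P hP0 hP1 r rmax hr γ hγ0 hγ1 ε C rep hrep hKL π hπ0 hπ1 πC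
    hπC Q QC hQ hQC
end

section
/- Let S and A be nonempty finite types, P a transition kernel with P(s'|s,a) > 0 for all s, a, s', and π a policy with π(a|s) > 0 for all s, a. Define the inverse dynamics model P^π(a|s,s') = π(a|s) · P(s'|s,a) / P^π(s'|s), where P^π(s'|s) = Σ_{a'∈A} π(a'|s) P(s'|s,a'), and define the N-value N(s,a_i,a_j) = Σ_{s'∈S} P(s'|s,a_i) · log( P^π(a_j|s,s') / π(a_j|s) ). Then for every state s and every pair of actions a_i, a_j, the similarity factor satisfies D_KL(P(·|s,a_i) ‖ P(·|s,a_j)) = N(s,a_i,a_i) − N(s,a_i,a_j). -/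
/-- Lemma 2 (decomposition of the similarity factor): the KL divergence between
next-state distributions of two actions equals the difference of two N-values
built from the inverse dynamics model. -/
theorem similarity_factor_eq_N_diff
    {S A : Type*} [Fintype S] [Fintype A] [Nonempty S] [Nonempty A]
    (P : S → A → S → ℝ)
    (hP0 : ∀ s a s', 0 < P s a s')
    (hP1 : ∀ s a, ∑ s', P s a s' = 1)
    (π : S → A → ℝ)
    (hπ0 : ∀ s a, 0 < π s a)
    (hπ1 : ∀ s, ∑ a, π s a = 1)
    (Pπ : S → S → ℝ)
    (hPπ : ∀ s s', Pπ s s' = ∑ a, π s a * P s a s')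
    (inv : A → S → S → ℝ)
    (hinv : ∀ a s s', inv a s s' = π s a * P s a s' / Pπ s s')
    (N : S → A → A → ℝ)
    (hN : ∀ s ai aj, N s ai aj = ∑ s', P s ai s' * Real.log (inv aj s s' / π s aj)) :
    ∀ (s : S) (ai aj : A),
      ∑ s', P s ai s' * Real.log (P s ai s' / P s aj s') = N s ai ai - N s ai aj := by
  intro s ai aj
  have hPπ0 : ∀ s', 0 < Pπ s s' := by
    intro s'
    rw [hPπ]
    exact Finset.sum_pos (fun a _ => mul_pos (hπ0 s a) (hP0 s a s')) Finset.univ_nonempty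
  have key : ∀ a s', inv a s s' / π s a = P s a s' / Pπ s s' := by
    intro a s'
    rw [hinv, div_div, mul_comm (Pπ s s'), mul_div_mul_left _ _ (hπ0 s a).ne']
  rw [hN, hN, ← Finset.sum_sub_distrib]
  apply Finset.sum_congr rfl
  intro s' _
  rw [← mul_sub, key, key, Real.log_div (hP0 s ai s').ne' (hPπ0 s').ne',
    Real.log_div (hP0 s aj s').ne' (hPπ0 s').ne',
    Real.log_div (hP0 s ai s').ne' (hP0 s aj s').ne']
  ring
end

section
/- Let X be a nonempty finite type and let p, q : X → ℝ be probability mass functions on X (nonnegative, summing to 1) with q(x) > 0 for all x. Then the total variation distance is controlled by the Kullback–Leibler divergence: (Σ_{x∈X} |p(x) − q(x)|)² ≤ 2 · Σ_{x∈X} p(x) log(p(x)/q(x)), where terms with p(x) = 0 read as 0. -/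
/-!
Pointwise, `klFun t = t log t - t + 1` dominates `3 (t - 1)² / (2 (t + 2))` on `[0, ∞)`: their
difference is convex, since its second derivative is `1/t - 27/(t + 2)³ ≥ 0`, and it is stationary
with value `0` at `t = 1`. With `t = p/q` this gives `3 (p - q)² ≤ 2 (p + 2q) · q klFun (p/q)`, and
Cauchy–Schwarz with the weights `p + 2q`, of total mass `3`, turns the sum of these bounds into
Pinsker's inequality, since `∑ q klFun (p/q)` is the Kullback–Leibler divergence.
-/

open Real Set Finset InformationTheory

noncomputable def pinskerGap (t : ℝ) : ℝ := klFun t - 3 * (t - 1) ^ 2 / (2 * (t + 2))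

lemma hasDerivAt_pinskerGap {t : ℝ} (ht : 0 < t) :
    HasDerivAt pinskerGap (log t - 3 * (t - 1) * (t + 5) / (2 * (t + 2) ^ 2)) t := by
  have h2 : t + 2 ≠ 0 := by positivity
  refine ((hasDerivAt_klFun ht.ne').sub <|
    ((((hasDerivAt_id' t).sub_const 1).fun_pow 2).const_mul 3).div
      (((hasDerivAt_id' t).add_const 2).const_mul 2) (by simp [h2])).congr_deriv ?_
  field_simp
  ring

lemma hasDerivAt_deriv_pinskerGap {t : ℝ} (ht : 0 < t) :
    HasDerivAt (fun s ↦ log s - 3 * (s - 1) * (s + 5) / (2 * (s + 2) ^ 2))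
      (1 / t - 27 / (t + 2) ^ 3) t := by
  have h2 : t + 2 ≠ 0 := by positivity
  refine ((hasDerivAt_log ht.ne').sub <|
    ((((hasDerivAt_id' t).sub_const 1).const_mul 3).fun_mul ((hasDerivAt_id' t).add_const 5)).div
      ((((hasDerivAt_id' t).add_const 2).fun_pow 2).const_mul 2) (by simp [h2])).congr_deriv ?_
  field_simp
  ring

lemma convexOn_pinskerGap : ConvexOn ℝ (Ici 0) pinskerGap := by
  refine convexOn_of_hasDerivWithinAt2_nonneg (convex_Ici 0) ?_
    (fun t ht ↦ (hasDerivAt_pinskerGap (interior_Ici.subset ht)).hasDerivWithinAt)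
    (fun t ht ↦ (hasDerivAt_deriv_pinskerGap (interior_Ici.subset ht)).hasDerivWithinAt)
    fun t ht ↦ ?_
  · refine continuous_klFun.continuousOn.sub <| ContinuousOn.div (by fun_prop) (by fun_prop) ?_
    intro t (ht : 0 ≤ t)
    positivity
  · have ht : 0 < t := interior_Ici.subset ht
    rw [sub_nonneg, div_le_div_iff₀ (by positivity) ht]
    -- `(t + 2)³ - 27 t = (t - 1)² (t + 8)`
    nlinarith [mul_nonneg (sq_nonneg (t - 1)) (by linarith : (0 : ℝ) ≤ t + 8)]

lemma pinskerGap_nonneg {t : ℝ} (ht : 0 ≤ t) : 0 ≤ pinskerGap t := by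
  have hmin : IsMinOn pinskerGap (Ici 0) 1 := by
    refine convexOn_pinskerGap.isMinOn_of_rightDeriv_eq_zero (by simp) ?_
    rw [(hasDerivAt_pinskerGap one_pos).hasDerivWithinAt.derivWithin (uniqueDiffWithinAt_Ioi 1)]
    norm_num
  have hone : pinskerGap 1 = 0 := by norm_num [pinskerGap, klFun_one]
  exact hone ▸ hmin ht

lemma three_mul_sq_sub_le_mul_klFun_div {p q : ℝ} (hp : 0 ≤ p) (hq : 0 < q) :
    3 * (p - q) ^ 2 ≤ 2 * (p + 2 * q) * (q * klFun (p / q)) := by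
  have hbound := sub_nonneg.1 (pinskerGap_nonneg (div_nonneg hp hq.le))
  rw [div_le_iff₀ (by positivity)] at hbound
  have hlhs : 3 * (p - q) ^ 2 = q ^ 2 * (3 * (p / q - 1) ^ 2) := by
    field_simp
  have hrhs : 2 * (p + 2 * q) * (q * klFun (p / q)) =
      q ^ 2 * (klFun (p / q) * (2 * (p / q + 2))) := by
    field_simp
  rw [hlhs, hrhs]
  exact mul_le_mul_of_nonneg_left hbound (sq_nonneg q)

lemma sum_mul_klFun_div {ι : Type*} (s : Finset ι) (p q : ι → ℝ) (hq : ∀ i ∈ s, q i ≠ 0) :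
    ∑ i ∈ s, q i * klFun (p i / q i) =
      ∑ i ∈ s, p i * log (p i / q i) + ∑ i ∈ s, q i - ∑ i ∈ s, p i := by
  rw [← sum_add_distrib, ← sum_sub_distrib]
  refine sum_congr rfl fun i hi ↦ ?_
  rw [klFun_apply]
  field_simp [hq i hi]

lemma sq_sum_abs_sub_le_mul_sum_mul_klFun {ι : Type*} (s : Finset ι) {p q : ι → ℝ}
    (hp : ∀ i ∈ s, 0 ≤ p i) (hq : ∀ i ∈ s, 0 < q i) :
    (∑ i ∈ s, |p i - q i|) ^ 2 ≤
      2 / 3 * (∑ i ∈ s, p i + 2 * ∑ i ∈ s, q i) * ∑ i ∈ s, q i * klFun (p i / q i) := by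
  have hweights : ∑ i ∈ s, 2 / 3 * (p i + 2 * q i) =
      2 / 3 * (∑ i ∈ s, p i + 2 * ∑ i ∈ s, q i) := by
    rw [← mul_sum, sum_add_distrib, mul_sum]
  rw [← hweights]
  refine sum_sq_le_sum_mul_sum_of_sq_le_mul s (fun i hi ↦ ?_) (fun i hi ↦ ?_) fun i hi ↦ ?_
  · linarith [hp i hi, hq i hi]
  · exact mul_nonneg (hq i hi).le (klFun_nonneg (div_nonneg (hp i hi) (hq i hi).le))
  · rw [sq_abs]
    linarith [three_mul_sq_sub_le_mul_klFun_div (hp i hi) (hq i hi)]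

theorem pinsker_pmf_general {X : Type*} [Fintype X]
    (p q : X → ℝ)
    (hp0 : ∀ x, 0 ≤ p x) (hp1 : ∑ x, p x = 1)
    (hq0 : ∀ x, 0 < q x) (hq1 : ∑ x, q x = 1) :
    (∑ x, |p x - q x|) ^ 2 ≤ 2 * ∑ x, p x * Real.log (p x / q x) := by
  have hkl : ∑ x, q x * klFun (p x / q x) = ∑ x, p x * log (p x / q x) := by
    rw [sum_mul_klFun_div _ _ _ fun x _ ↦ (hq0 x).ne', hp1, hq1, add_sub_cancel_right]
  calc (∑ x, |p x - q x|) ^ 2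
      ≤ 2 / 3 * (∑ x, p x + 2 * ∑ x, q x) * ∑ x, q x * klFun (p x / q x) :=
        sq_sum_abs_sub_le_mul_sum_mul_klFun _ (fun x _ ↦ hp0 x) fun x _ ↦ hq0 x
    _ = 2 * ∑ x, p x * log (p x / q x) := by
        rw [hkl, hp1, hq1]
        norm_num

/-- Pinsker's inequality for probability mass functions on a nonempty finite type:
the squared total variation (as the full ℓ¹ distance) is bounded by twice the
Kullback–Leibler divergence. -/
theorem pinsker_pmf {X : Type*} [Fintype X] [Nonempty X]
    (p q : X → ℝ)
    (hp0 : ∀ x, 0 ≤ p x) (hp1 : ∑ x, p x = 1)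
    (hq0 : ∀ x, 0 < q x) (hq1 : ∑ x, q x = 1) :
    (∑ x, |p x - q x|) ^ 2 ≤ 2 * ∑ x, p x * Real.log (p x / q x) :=
  pinsker_pmf_general p q hp0 hp1 hq0 hq1
end

section
/- Let S and A be nonempty finite types, let P and P̂ be two transition kernels, and let π be a policy. Let Q and Q̂ be the policy-induced state transition matrices Q(s'|s) = Σ_{a∈A} π(a|s) P(s'|s,a) and Q̂(s'|s) = Σ_{a∈A} π(a|s) P̂(s'|s,a). If there is δ ≥ 0 such that for all s ∈ S and a ∈ A, Σ_{s'∈S} |P(s'|s,a) − P̂(s'|s,a)| ≤ δ, then for every t ∈ ℕ and every initial state s₀ ∈ S, the t-step state distributions satisfy Σ_{s∈S} |(Q^t)(s₀,s) − (Q̂^t)(s₀,s)| ≤ t · δ, where Q^t denotes the t-th matrix power. -/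
/-- Lemma B.2 of Janner et al.: if two kernels are within δ in total variation
for every state-action pair, then the t-step state distributions of a common
policy differ by at most t·δ in total variation. -/
theorem t_step_tv_le
    {S A : Type*} [Fintype S] [Fintype A] [DecidableEq S] [Nonempty S] [Nonempty A]
    (P Phat : S → A → S → ℝ)
    (hP0 : ∀ s a s', 0 ≤ P s a s')
    (hP1 : ∀ s a, ∑ s', P s a s' = 1)
    (hPhat0 : ∀ s a s', 0 ≤ Phat s a s')
    (hPhat1 : ∀ s a, ∑ s', Phat s a s' = 1)
    (π : S → A → ℝ)
    (hπ0 : ∀ s a, 0 ≤ π s a)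
    (hπ1 : ∀ s, ∑ a, π s a = 1)
    (Q Qhat : Matrix S S ℝ)
    (hQ : ∀ s s', Q s s' = ∑ a, π s a * P s a s')
    (hQhat : ∀ s s', Qhat s s' = ∑ a, π s a * Phat s a s')
    (δ : ℝ) (hδ : 0 ≤ δ)
    (hbound : ∀ s a, ∑ s', |P s a s' - Phat s a s'| ≤ δ) :
    ∀ (t : ℕ) (s₀ : S), ∑ s, |(Q ^ t) s₀ s - (Qhat ^ t) s₀ s| ≤ t * δ := by
  have hQ0 : ∀ s s', 0 ≤ Q s s' := fun s s' => by
    rw [hQ]; exact Finset.sum_nonneg fun a _ => mul_nonneg (hπ0 s a) (hP0 s a s')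
  have hQ1 : ∀ s, ∑ s', Q s s' = 1 := by
    intro s
    simp only [hQ]
    rw [Finset.sum_comm]
    calc ∑ a, ∑ s', π s a * P s a s' = ∑ a, π s a * ∑ s', P s a s' := by
          simp [Finset.mul_sum]
      _ = 1 := by simp [hP1, hπ1]
  have hQhat0 : ∀ s s', 0 ≤ Qhat s s' := fun s s' => by
    rw [hQhat]; exact Finset.sum_nonneg fun a _ => mul_nonneg (hπ0 s a) (hPhat0 s a s')
  have hQhat1 : ∀ s, ∑ s', Qhat s s' = 1 := by
    intro s
    simp only [hQhat]
    rw [Finset.sum_comm]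
    calc ∑ a, ∑ s', π s a * Phat s a s' = ∑ a, π s a * ∑ s', Phat s a s' := by
          simp [Finset.mul_sum]
      _ = 1 := by simp [hPhat1, hπ1]
  -- row TV bound on Q vs Qhat
  have hrow : ∀ s', ∑ s, |Q s' s - Qhat s' s| ≤ δ := by
    intro s'
    calc ∑ s, |Q s' s - Qhat s' s|
        = ∑ s, |∑ a, π s' a * (P s' a s - Phat s' a s)| := by
          simp [hQ, hQhat, mul_sub, Finset.sum_sub_distrib]
      _ ≤ ∑ s, ∑ a, |π s' a * (P s' a s - Phat s' a s)| := by
          exact Finset.sum_le_sum fun s _ => Finset.abs_sum_le_sum_abs _ _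
      _ = ∑ a, π s' a * ∑ s, |P s' a s - Phat s' a s| := by
          rw [Finset.sum_comm]
          refine Finset.sum_congr rfl fun a _ => ?_
          rw [Finset.mul_sum]
          refine Finset.sum_congr rfl fun s _ => ?_
          rw [abs_mul, abs_of_nonneg (hπ0 s' a)]
      _ ≤ ∑ a, π s' a * δ := by
          exact Finset.sum_le_sum fun a _ =>
            mul_le_mul_of_nonneg_left (hbound s' a) (hπ0 s' a)
      _ = δ := by rw [← Finset.sum_mul, hπ1, one_mul]
  -- row sums / nonnegativity of Qhat ^ t
  have hpow0 : ∀ t s s', 0 ≤ (Qhat ^ t) s s' := by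
    intro t
    induction t with
    | zero => intro s s'; simp [Matrix.one_apply]; positivity
    | succ t ih =>
      intro s s'
      rw [pow_succ, Matrix.mul_apply]
      exact Finset.sum_nonneg fun j _ => mul_nonneg (ih s j) (hQhat0 j s')
  have hpow1 : ∀ t s, ∑ s', (Qhat ^ t) s s' = 1 := by
    intro t
    induction t with
    | zero => intro s; simp [Matrix.one_apply]
    | succ t ih =>
      intro s
      simp only [pow_succ, Matrix.mul_apply]
      rw [Finset.sum_comm]
      calc ∑ j, ∑ s', (Qhat ^ t) s j * Qhat j s'
          = ∑ j, (Qhat ^ t) s j * ∑ s', Qhat j s' := by simp [Finset.mul_sum]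
        _ = 1 := by simp [hQhat1, ih]
  intro t
  induction t with
  | zero => intro s₀; simp
  | succ t ih =>
    intro s₀
    have key : ∑ s, |(Q ^ (t+1)) s₀ s - (Qhat ^ (t+1)) s₀ s|
        ≤ (∑ s', |(Q ^ t) s₀ s' - (Qhat ^ t) s₀ s'|) + δ := by
      calc ∑ s, |(Q ^ (t+1)) s₀ s - (Qhat ^ (t+1)) s₀ s|
          = ∑ s, |∑ s', (((Q ^ t) s₀ s' - (Qhat ^ t) s₀ s') * Q s' s
              + (Qhat ^ t) s₀ s' * (Q s' s - Qhat s' s))| := by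
            refine Finset.sum_congr rfl fun s _ => ?_
            rw [pow_succ, pow_succ, Matrix.mul_apply, Matrix.mul_apply,
              ← Finset.sum_sub_distrib]
            congr 1
            refine Finset.sum_congr rfl fun s' _ => ?_
            ring
        _ ≤ ∑ s, ∑ s', (|(Q ^ t) s₀ s' - (Qhat ^ t) s₀ s'| * Q s' s
              + (Qhat ^ t) s₀ s' * |Q s' s - Qhat s' s|) := by
            refine Finset.sum_le_sum fun s _ => ?_
            refine le_trans (Finset.abs_sum_le_sum_abs _ _) ?_
            refine Finset.sum_le_sum fun s' _ => ?_
            refine le_trans (abs_add_le _ _) ?_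
            rw [abs_mul, abs_mul, abs_of_nonneg (hQ0 s' s),
              abs_of_nonneg (hpow0 t s₀ s')]
        _ = (∑ s', |(Q ^ t) s₀ s' - (Qhat ^ t) s₀ s'| * ∑ s, Q s' s)
            + ∑ s', (Qhat ^ t) s₀ s' * ∑ s, |Q s' s - Qhat s' s| := by
            rw [Finset.sum_comm]
            rw [← Finset.sum_add_distrib]
            refine Finset.sum_congr rfl fun s' _ => ?_
            rw [Finset.sum_add_distrib, Finset.mul_sum, Finset.mul_sum]
        _ ≤ (∑ s', |(Q ^ t) s₀ s' - (Qhat ^ t) s₀ s'|) + ∑ s', (Qhat ^ t) s₀ s' * δ := by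
            refine add_le_add ?_ ?_
            · refine le_of_eq (Finset.sum_congr rfl fun s' _ => ?_)
              rw [hQ1 s', mul_one]
            · exact Finset.sum_le_sum fun s' _ =>
                mul_le_mul_of_nonneg_left (hrow s') (hpow0 t s₀ s')
        _ = (∑ s', |(Q ^ t) s₀ s' - (Qhat ^ t) s₀ s'|) + δ := by
            rw [← Finset.sum_mul, hpow1 t s₀, one_mul]
    calc ∑ s, |(Q ^ (t+1)) s₀ s - (Qhat ^ (t+1)) s₀ s|
        ≤ (∑ s', |(Q ^ t) s₀ s' - (Qhat ^ t) s₀ s'|) + δ := key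
      _ ≤ t * δ + δ := by linarith [ih s₀]
      _ = (t + 1 : ℕ) * δ := by push_cast; ring
end

section
/- Let S and A be nonempty finite types, let P and P̂ be two transition kernels, let π be a policy with induced state transition matrices Q and Q̂ (Q(s'|s) = Σ_{a∈A} π(a|s) P(s'|s,a), Q̂ analogously from P̂), let r be a reward function with 0 ≤ r(s) ≤ r_max for all s, and let γ ∈ [0,1). If there is δ ≥ 0 such that for all s ∈ S and a ∈ A, Σ_{s'∈S} |P(s'|s,a) − P̂(s'|s,a)| ≤ δ, then the value functions of π in the two MDPs satisfy, for every state s ∈ S, | Σ_{t=0}^∞ γ^t Σ_{s'∈S} (Q^t)(s,s') r(s') − Σ_{t=0}^∞ γ^t Σ_{s'∈S} (Q̂^t)(s,s') r(s') | ≤ (γ · r_max / (1−γ)²) · δ. -/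
/-!
Both value functions are discounted sums of the bounded sequences `(Q ^ t *ᵥ r) s` and
`(Qhat ^ t *ᵥ r) s`. In the `ℓ∞` operator norm row-stochastic matrices have norm at most `1`,
and `Q - Qhat` has norm at most `δ` (each row of `Q - Qhat` is a `π`-average of the rows of
`P - Phat`). Telescoping `Q ^ t - Qhat ^ t` then gives
`|(Q ^ t *ᵥ r) s - (Qhat ^ t *ᵥ r) s| ≤ t * δ * rmax`, and `∑ t * γ ^ t = γ / (1 - γ) ^ 2`.
-/

open Finset

theorem norm_pow_sub_pow_le_of_norm_le_one {R : Type*} [SeminormedRing R] {a b : R}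
    (ha : ‖a‖ ≤ 1) (hb : ‖b‖ ≤ 1) (n : ℕ) : ‖a ^ n - b ^ n‖ ≤ n * ‖a - b‖ := by
  induction n with
  | zero => simp
  | succ n ih =>
    have hbn : ‖(a - b) * b ^ n‖ ≤ ‖a - b‖ := by
      rcases n.eq_zero_or_pos with rfl | hn
      · simp
      · calc ‖(a - b) * b ^ n‖ ≤ ‖a - b‖ * ‖b‖ ^ n :=
              (norm_mul_le _ _).trans (by gcongr; exact norm_pow_le' b hn)
          _ ≤ ‖a - b‖ := mul_le_of_le_one_right (norm_nonneg _) (pow_le_one₀ (norm_nonneg _) hb)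
    calc ‖a ^ (n + 1) - b ^ (n + 1)‖ = ‖a * (a ^ n - b ^ n) + (a - b) * b ^ n‖ := by
          rw [pow_succ', pow_succ']; noncomm_ring
      _ ≤ ‖a‖ * ‖a ^ n - b ^ n‖ + ‖a - b‖ :=
          (norm_add_le _ _).trans (add_le_add (norm_mul_le _ _) hbn)
      _ ≤ n * ‖a - b‖ + ‖a - b‖ :=
          add_le_add_left ((mul_le_of_le_one_left (norm_nonneg _) ha).trans ih) _
      _ = (n + 1 : ℕ) * ‖a - b‖ := by push_cast; ring

theorem summable_pow_mul_of_abs_le {γ C : ℝ} (hγ0 : 0 ≤ γ) (hγ1 : γ < 1) {a : ℕ → ℝ}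
    (ha : ∀ t, |a t| ≤ C) : Summable fun t => γ ^ t * a t :=
  ((summable_geometric_of_lt_one hγ0 hγ1).mul_right C).of_norm_bounded fun t => by
    rw [Real.norm_eq_abs, abs_mul, abs_of_nonneg (pow_nonneg hγ0 t)]
    exact mul_le_mul_of_nonneg_left (ha t) (pow_nonneg hγ0 t)

theorem abs_tsum_pow_mul_sub_tsum_pow_mul_le {γ C D : ℝ} (hγ0 : 0 ≤ γ) (hγ1 : γ < 1)
    {a b : ℕ → ℝ} (ha : ∀ t, |a t| ≤ C) (hb : ∀ t, |b t| ≤ C)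
    (hab : ∀ t, |a t - b t| ≤ t * D) :
    |∑' t, γ ^ t * a t - ∑' t, γ ^ t * b t| ≤ γ / (1 - γ) ^ 2 * D := by
  have hγ : ‖γ‖ < 1 := by rwa [Real.norm_eq_abs, abs_of_nonneg hγ0]
  rw [← (summable_pow_mul_of_abs_le hγ0 hγ1 ha).tsum_sub (summable_pow_mul_of_abs_le hγ0 hγ1 hb),
    ← Real.norm_eq_abs]
  refine tsum_of_norm_bounded
    ((hasSum_coe_mul_geometric_of_norm_lt_one (𝕜 := ℝ) hγ).mul_right D) fun t => ?_
  rw [← mul_sub, Real.norm_eq_abs, abs_mul, abs_of_nonneg (pow_nonneg hγ0 t)]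
  calc γ ^ t * |a t - b t| ≤ γ ^ t * (t * D) := by gcongr; exact hab t
    _ = t * γ ^ t * D := by ring

theorem sum_abs_sum_mul_sub_sum_mul_le {ι κ : Type*} [Fintype ι] [Fintype κ] {w : ι → ℝ}
    {p q : ι → κ → ℝ} {δ : ℝ} (hw0 : ∀ i, 0 ≤ w i) (hw1 : ∑ i, w i = 1)
    (hpq : ∀ i, ∑ j, |p i j - q i j| ≤ δ) :
    ∑ j, |∑ i, w i * p i j - ∑ i, w i * q i j| ≤ δ :=
  calc ∑ j, |∑ i, w i * p i j - ∑ i, w i * q i j|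
      = ∑ j, |∑ i, w i * (p i j - q i j)| := by simp only [mul_sub, sum_sub_distrib]
    _ ≤ ∑ j, ∑ i, w i * |p i j - q i j| := by
        gcongr with j
        refine (abs_sum_le_sum_abs _ _).trans_eq (sum_congr rfl fun i _ => ?_)
        rw [abs_mul, abs_of_nonneg (hw0 i)]
    _ = ∑ i, w i * ∑ j, |p i j - q i j| := by rw [sum_comm]; simp only [mul_sum]
    _ ≤ ∑ i, w i * δ := by gcongr with i; exacts [hw0 i, hpq i]
    _ = δ := by rw [← sum_mul, hw1, one_mul]

namespace Matrix

theorem mem_rowStochastic_of_eq_sum_mul {n R ι : Type*} [Fintype n] [DecidableEq n] [Fintype ι]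
    [CommSemiring R] [PartialOrder R] [IsOrderedRing R] {M : Matrix n n R} {w : n → ι → R}
    {P : n → ι → n → R}
    (hw0 : ∀ i k, 0 ≤ w i k) (hw1 : ∀ i, ∑ k, w i k = 1)
    (hP0 : ∀ i k j, 0 ≤ P i k j) (hP1 : ∀ i k, ∑ j, P i k j = 1)
    (hM : ∀ i j, M i j = ∑ k, w i k * P i k j) : M ∈ rowStochastic R n := by
  refine mem_rowStochastic_iff_sum.2 ⟨fun i j => ?_, fun i => ?_⟩
  · rw [hM]
    exact sum_nonneg fun k _ => mul_nonneg (hw0 i k) (hP0 i k j)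
  · simp only [hM]
    rw [sum_comm]
    simp only [← mul_sum, hP1, mul_one, hw1]

section LinftyOpNorm

open scoped Norms.Operator

theorem linfty_opNorm_le_of_sum_norm_le {m n α : Type*} [Fintype m] [Fintype n]
    [SeminormedAddCommGroup α] {A : Matrix m n α} {δ : ℝ} (hδ : 0 ≤ δ)
    (h : ∀ i, ∑ j, ‖A i j‖ ≤ δ) : ‖A‖ ≤ δ := by
  change ‖fun i => WithLp.toLp 1 (A i)‖ ≤ δ
  rw [pi_norm_le_iff_of_nonneg hδ]
  intro i
  rw [PiLp.norm_eq_of_L1]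
  exact h i

variable {n : Type*} [Fintype n] [DecidableEq n]

theorem linfty_opNorm_le_one_of_mem_rowStochastic {M : Matrix n n ℝ}
    (hM : M ∈ rowStochastic ℝ n) : ‖M‖ ≤ 1 :=
  linfty_opNorm_le_of_sum_norm_le zero_le_one fun i => by
    simp only [Real.norm_eq_abs, abs_of_nonneg (nonneg_of_mem_rowStochastic hM),
      sum_row_of_mem_rowStochastic hM, le_refl]

theorem abs_mulVec_apply_le_linfty_opNorm_mul {A : Matrix n n ℝ} {v : n → ℝ} {c : ℝ}
    (hv : ∀ j, |v j| ≤ c) (i : n) : |(A *ᵥ v) i| ≤ ‖A‖ * c :=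
  have : Nonempty n := ⟨i⟩
  calc |(A *ᵥ v) i| ≤ ‖A *ᵥ v‖ := norm_le_pi_norm (A *ᵥ v) i
    _ ≤ ‖A‖ * ‖v‖ := linfty_opNorm_mulVec A v
    _ ≤ ‖A‖ * c := by gcongr; exact (pi_norm_le_iff_of_nonempty v).2 hv

theorem abs_mulVec_apply_le_of_mem_rowStochastic {M : Matrix n n ℝ} (hM : M ∈ rowStochastic ℝ n)
    {v : n → ℝ} {c : ℝ} (hv : ∀ j, |v j| ≤ c) (i : n) : |(M *ᵥ v) i| ≤ c :=
  (abs_mulVec_apply_le_linfty_opNorm_mul hv i).trans <| mul_le_of_le_one_left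
    ((abs_nonneg _).trans (hv i)) (linfty_opNorm_le_one_of_mem_rowStochastic hM)

theorem abs_pow_mulVec_apply_sub_le {M N : Matrix n n ℝ} (hM : M ∈ rowStochastic ℝ n)
    (hN : N ∈ rowStochastic ℝ n) {δ : ℝ} (hδ : 0 ≤ δ) (hMN : ∀ i, ∑ j, |M i j - N i j| ≤ δ)
    {v : n → ℝ} {c : ℝ} (hv : ∀ j, |v j| ≤ c) (t : ℕ) (i : n) :
    |(M ^ t *ᵥ v) i - (N ^ t *ᵥ v) i| ≤ t * δ * c := by
  have hdist : ‖M - N‖ ≤ δ := linfty_opNorm_le_of_sum_norm_le hδ fun i => by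
    simpa only [sub_apply, Real.norm_eq_abs] using hMN i
  have hpow : ‖M ^ t - N ^ t‖ ≤ t * δ :=
    (norm_pow_sub_pow_le_of_norm_le_one (linfty_opNorm_le_one_of_mem_rowStochastic hM)
      (linfty_opNorm_le_one_of_mem_rowStochastic hN) t).trans (by gcongr)
  rw [← Pi.sub_apply, ← sub_mulVec]
  exact (abs_mulVec_apply_le_linfty_opNorm_mul hv i).trans
    (mul_le_mul_of_nonneg_right hpow ((abs_nonneg _).trans (hv i)))

end LinftyOpNorm

end Matrix

theorem value_diff_le_of_kernel_tv_general
    {S A : Type*} [Fintype S] [Fintype A] [DecidableEq S]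
    (P Phat : S → A → S → ℝ)
    (hP0 : ∀ s a s', 0 ≤ P s a s')
    (hP1 : ∀ s a, ∑ s', P s a s' = 1)
    (hPhat0 : ∀ s a s', 0 ≤ Phat s a s')
    (hPhat1 : ∀ s a, ∑ s', Phat s a s' = 1)
    (π : S → A → ℝ)
    (hπ0 : ∀ s a, 0 ≤ π s a)
    (hπ1 : ∀ s, ∑ a, π s a = 1)
    (Q Qhat : Matrix S S ℝ)
    (hQ : ∀ s s', Q s s' = ∑ a, π s a * P s a s')
    (hQhat : ∀ s s', Qhat s s' = ∑ a, π s a * Phat s a s')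
    (r : S → ℝ) (rmax : ℝ)
    (hr : ∀ s, 0 ≤ r s ∧ r s ≤ rmax)
    (γ : ℝ) (hγ0 : 0 ≤ γ) (hγ1 : γ < 1)
    (δ : ℝ) (hδ : 0 ≤ δ)
    (hbound : ∀ s a, ∑ s', |P s a s' - Phat s a s'| ≤ δ) :
    ∀ s : S,
      |(∑' t : ℕ, γ ^ t * ∑ s', (Q ^ t) s s' * r s')
        - ∑' t : ℕ, γ ^ t * ∑ s', (Qhat ^ t) s s' * r s'|
      ≤ γ * rmax / (1 - γ) ^ 2 * δ := by
  intro s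
  have hQs : Q ∈ Matrix.rowStochastic ℝ S :=
    Matrix.mem_rowStochastic_of_eq_sum_mul hπ0 hπ1 hP0 hP1 hQ
  have hQhats : Qhat ∈ Matrix.rowStochastic ℝ S :=
    Matrix.mem_rowStochastic_of_eq_sum_mul hπ0 hπ1 hPhat0 hPhat1 hQhat
  have hdist : ∀ s, ∑ s', |Q s s' - Qhat s s'| ≤ δ := fun s => by
    simpa only [hQ, hQhat] using sum_abs_sum_mul_sub_sum_mul_le (hπ0 s) (hπ1 s) (hbound s)
  have hr' : ∀ s, |r s| ≤ rmax := fun s => abs_le.2 ⟨by linarith [hr s], (hr s).2⟩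
  calc _ ≤ γ / (1 - γ) ^ 2 * (δ * rmax) :=
        abs_tsum_pow_mul_sub_tsum_pow_mul_le hγ0 hγ1
          (fun t => Matrix.abs_mulVec_apply_le_of_mem_rowStochastic (pow_mem hQs t) hr' s)
          (fun t => Matrix.abs_mulVec_apply_le_of_mem_rowStochastic (pow_mem hQhats t) hr' s)
          (fun t => by
            simpa only [mul_assoc] using
              Matrix.abs_pow_mulVec_apply_sub_le hQs hQhats hδ hdist hr' t s)
    _ = γ * rmax / (1 - γ) ^ 2 * δ := by ring

/-- If two kernels are within δ in total variation for every state-action pair,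
then the value functions of a common policy in the two MDPs differ by at most
γ·r_max·δ/(1-γ)². -/
theorem value_diff_le_of_kernel_tv
    {S A : Type*} [Fintype S] [Fintype A] [DecidableEq S] [Nonempty S] [Nonempty A]
    (P Phat : S → A → S → ℝ)
    (hP0 : ∀ s a s', 0 ≤ P s a s')
    (hP1 : ∀ s a, ∑ s', P s a s' = 1)
    (hPhat0 : ∀ s a s', 0 ≤ Phat s a s')
    (hPhat1 : ∀ s a, ∑ s', Phat s a s' = 1)
    (π : S → A → ℝ)
    (hπ0 : ∀ s a, 0 ≤ π s a)
    (hπ1 : ∀ s, ∑ a, π s a = 1)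
    (Q Qhat : Matrix S S ℝ)
    (hQ : ∀ s s', Q s s' = ∑ a, π s a * P s a s')
    (hQhat : ∀ s s', Qhat s s' = ∑ a, π s a * Phat s a s')
    (r : S → ℝ) (rmax : ℝ)
    (hr : ∀ s, 0 ≤ r s ∧ r s ≤ rmax)
    (γ : ℝ) (hγ0 : 0 ≤ γ) (hγ1 : γ < 1)
    (δ : ℝ) (hδ : 0 ≤ δ)
    (hbound : ∀ s a, ∑ s', |P s a s' - Phat s a s'| ≤ δ) :
    ∀ s : S,
      |(∑' t : ℕ, γ ^ t * ∑ s', (Q ^ t) s s' * r s')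
        - ∑' t : ℕ, γ ^ t * ∑ s', (Qhat ^ t) s s' * r s'|
      ≤ γ * rmax / (1 - γ) ^ 2 * δ :=
  value_diff_le_of_kernel_tv_general P Phat hP0 hP1 hPhat0 hPhat1 π hπ0 hπ1 Q Qhat hQ hQhat r rmax
    hr γ hγ0 hγ1 δ hδ hbound
end
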